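/- Let θ, θ' > 0 and a, b ∈ ℝ. Then the function u ↦ δ⁴_θ(|·|)(u+a) · δ⁴_{θ'}(|·|)(u+b) is compactly supported and ∫_ℝ δ⁴_θ(|·|)(u+a) · δ⁴_{θ'}(|·|)(u+b) du = (1/3) · δ⁴_θδ⁴_{θ'}(|·|³)(b−a), where |·| and |·|³ denote the functions x ↦ |x| and x ↦ |x|³. -/

import Mathlib

open Real MeasureTheory

/-- Fourth-order central difference with step `θ`:
`δ⁴_θF(x) = F(x+2θ) − 4F(x+θ) + 6F(x) − 4F(x−θ) + F(x−2θ)`. -/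
noncomputable def cdiff4 (θ : ℝ) (F : ℝ → ℝ) (x : ℝ) : ℝ :=
  F (x + 2*θ) - 4 * F (x + θ) + 6 * F x - 4 * F (x - θ) + F (x - 2*θ)

private lemma hd_poly (s c u : ℝ) :
    HasDerivAt (fun u : ℝ => u^3/3 + (s+c)*u^2/2 + s*c*u) (u^2 + (s+c)*u + s*c) u := by
  have h1 := (hasDerivAt_pow 3 u).div_const 3
  have h2 := ((hasDerivAt_pow 2 u).const_mul (s+c)).div_const 2
  have h3 := (hasDerivAt_id u).const_mul (s*c)
  refine ((h1.fun_add h2).fun_add h3).congr_deriv ?_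
  push_cast; ring

private lemma key_le (s c R : ℝ) (hsc : s ≤ c) (hs : |s| ≤ R) (hc : |c| ≤ R) :
    ∫ u in (-R)..R, |u+s| * |u+c| = 2*R^3/3 + 2*s*c*R + |c-s|^3/3 := by
  obtain ⟨hs1, hs2⟩ := abs_le.mp hs
  obtain ⟨hc1, hc2⟩ := abs_le.mp hc
  have hcont : Continuous (fun u : ℝ => |u+s| * |u+c|) := by fun_prop
  have i1 : IntervalIntegrable (fun u : ℝ => |u+s| * |u+c|) volume (-R) (-c) :=
    hcont.intervalIntegrable _ _
  have i2 : IntervalIntegrable (fun u : ℝ => |u+s| * |u+c|) volume (-c) (-s) :=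
    hcont.intervalIntegrable _ _
  have i3 : IntervalIntegrable (fun u : ℝ => |u+s| * |u+c|) volume (-s) R :=
    hcont.intervalIntegrable _ _
  have i23 : IntervalIntegrable (fun u : ℝ => |u+s| * |u+c|) volume (-c) R :=
    hcont.intervalIntegrable _ _
  have p1 : ∫ u in (-R)..(-c), |u+s| * |u+c|
      = ((-c)^3/3 + (s+c)*(-c)^2/2 + s*c*(-c)) - ((-R)^3/3 + (s+c)*(-R)^2/2 + s*c*(-R)) := by
    have h := intervalIntegral.integral_eq_sub_of_hasDerivAt
      (f := fun u : ℝ => u^3/3 + (s+c)*u^2/2 + s*c*u)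
      (f' := fun u : ℝ => |u+s| * |u+c|) (a := -R) (b := -c) ?_ i1
    · simpa using h
    · intro u hu
      rw [Set.uIcc_of_le (by linarith)] at hu
      obtain ⟨hu1, hu2⟩ := hu
      have e : |u+s| * |u+c| = u^2 + (s+c)*u + s*c := by
        rw [abs_of_nonpos (by linarith), abs_of_nonpos (by linarith)]; ring
      simpa [e] using hd_poly s c u
  have p2 : ∫ u in (-c)..(-s), |u+s| * |u+c|
      = (-((-s)^3/3 + (s+c)*(-s)^2/2 + s*c*(-s))) - (-((-c)^3/3 + (s+c)*(-c)^2/2 + s*c*(-c))) := by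
    have h := intervalIntegral.integral_eq_sub_of_hasDerivAt
      (f := fun u : ℝ => -(u^3/3 + (s+c)*u^2/2 + s*c*u))
      (f' := fun u : ℝ => |u+s| * |u+c|) (a := -c) (b := -s) ?_ i2
    · simpa using h
    · intro u hu
      rw [Set.uIcc_of_le (by linarith)] at hu
      obtain ⟨hu1, hu2⟩ := hu
      have e : |u+s| * |u+c| = -(u^2 + (s+c)*u + s*c) := by
        rw [abs_of_nonpos (by linarith), abs_of_nonneg (by linarith)]; ring
      have := (hd_poly s c u).fun_neg
      simpa [e] using this
  have p3 : ∫ u in (-s)..R, |u+s| * |u+c|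
      = (R^3/3 + (s+c)*R^2/2 + s*c*R) - ((-s)^3/3 + (s+c)*(-s)^2/2 + s*c*(-s)) := by
    have h := intervalIntegral.integral_eq_sub_of_hasDerivAt
      (f := fun u : ℝ => u^3/3 + (s+c)*u^2/2 + s*c*u)
      (f' := fun u : ℝ => |u+s| * |u+c|) (a := -s) (b := R) ?_ i3
    · simpa using h
    · intro u hu
      rw [Set.uIcc_of_le (by linarith)] at hu
      obtain ⟨hu1, hu2⟩ := hu
      have e : |u+s| * |u+c| = u^2 + (s+c)*u + s*c := by
        rw [abs_of_nonneg (by linarith), abs_of_nonneg (by linarith)]; ring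
      simpa [e] using hd_poly s c u
  rw [← intervalIntegral.integral_add_adjacent_intervals i1 i23,
      ← intervalIntegral.integral_add_adjacent_intervals i2 i3, p1, p2, p3,
      abs_of_nonneg (by linarith : (0:ℝ) ≤ c - s)]
  ring

private lemma key (s c R : ℝ) (hs : |s| ≤ R) (hc : |c| ≤ R) :
    ∫ u in (-R)..R, |u+s| * |u+c| = 2*R^3/3 + 2*s*c*R + |c-s|^3/3 := by
  rcases le_total s c with h | h
  · exact key_le s c R h hs hc
  · have e : ∀ u : ℝ, |u+s| * |u+c| = |u+c| * |u+s| := fun u => mul_comm _ _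
    simp only [e]
    rw [key_le c s R h hc hs, abs_sub_comm s c]
    ring

private lemma intsum (lo hi : ℝ) (f1 f2 f3 f4 f5 : ℝ → ℝ)
    (h1 : IntervalIntegrable f1 volume lo hi) (h2 : IntervalIntegrable f2 volume lo hi)
    (h3 : IntervalIntegrable f3 volume lo hi) (h4 : IntervalIntegrable f4 volume lo hi)
    (h5 : IntervalIntegrable f5 volume lo hi) :
    ∫ u in lo..hi, (f1 u - 4*f2 u + 6*f3 u - 4*f4 u + f5 u) =
      (∫ u in lo..hi, f1 u) - 4*(∫ u in lo..hi, f2 u) + 6*(∫ u in lo..hi, f3 u)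
        - 4*(∫ u in lo..hi, f4 u) + ∫ u in lo..hi, f5 u := by
  rw [intervalIntegral.integral_add
        (((h1.sub (h2.const_mul 4)).add (h3.const_mul 6)).sub (h4.const_mul 4)) h5,
      intervalIntegral.integral_sub
        ((h1.sub (h2.const_mul 4)).add (h3.const_mul 6)) (h4.const_mul 4),
      intervalIntegral.integral_add (h1.sub (h2.const_mul 4)) (h3.const_mul 6),
      intervalIntegral.integral_sub h1 (h2.const_mul 4),
      intervalIntegral.integral_const_mul, intervalIntegral.integral_const_mul,
      intervalIntegral.integral_const_mul]

private lemma stage1 (θ a' c R : ℝ)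
    (h1 : |a' + 2*θ| ≤ R) (h2 : |a' + θ| ≤ R) (h3 : |a'| ≤ R)
    (h4 : |a' - θ| ≤ R) (h5 : |a' - 2*θ| ≤ R) (hc : |c| ≤ R) :
    ∫ u in (-R)..R, cdiff4 θ (fun x => |x|) (u + a') * |u + c|
      = (1/3) * cdiff4 θ (fun x => |x| ^ (3:ℕ)) (c - a') := by
  have e : ∀ u : ℝ, cdiff4 θ (fun x => |x|) (u + a') * |u + c|
      = |u + (a' + 2*θ)| * |u + c| - 4*(|u + (a' + θ)| * |u + c|)
        + 6*(|u + a'| * |u + c|) - 4*(|u + (a' - θ)| * |u + c|)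
        + |u + (a' - 2*θ)| * |u + c| := by
    intro u
    simp only [cdiff4]
    rw [show u + a' + 2*θ = u + (a' + 2*θ) by ring, show u + a' + θ = u + (a' + θ) by ring,
        show u + a' - θ = u + (a' - θ) by ring, show u + a' - 2*θ = u + (a' - 2*θ) by ring]
    ring
  simp only [e]
  rw [intsum (-R) R _ _ _ _ _ ((by fun_prop : Continuous fun u : ℝ => |u + (a' + 2*θ)| * |u + c|).intervalIntegrable _ _) ((by fun_prop : Continuous fun u : ℝ => |u + (a' + θ)| * |u + c|).intervalIntegrable _ _) ((by fun_prop : Continuous fun u : ℝ => |u + a'| * |u + c|).intervalIntegrable _ _) ((by fun_prop : Continuous fun u : ℝ => |u + (a' - θ)| * |u + c|).intervalIntegrable _ _) ((by fun_prop : Continuous fun u : ℝ => |u + (a' - 2*θ)| * |u + c|).intervalIntegrable _ _),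
      key _ _ _ h1 hc, key _ _ _ h2 hc, key _ _ _ h3 hc, key _ _ _ h4 hc, key _ _ _ h5 hc]
  simp only [cdiff4]
  rw [show c - (a' + 2*θ) = c - a' - 2*θ by ring, show c - (a' + θ) = c - a' - θ by ring,
      show c - (a' - θ) = c - a' + θ by ring, show c - (a' - 2*θ) = c - a' + 2*θ by ring]
  ring

theorem statement8 (θ θ' : ℝ) (hθ : 0 < θ) (hθ' : 0 < θ') (a b : ℝ) :
    HasCompactSupport
      (fun u : ℝ => cdiff4 θ (fun x => |x|) (u + a) * cdiff4 θ' (fun x => |x|) (u + b)) ∧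
    (∫ u : ℝ, cdiff4 θ (fun x => |x|) (u + a) * cdiff4 θ' (fun x => |x|) (u + b))
      = (1/3) * cdiff4 θ (cdiff4 θ' (fun x => |x| ^ (3:ℕ))) (b - a) := by
  set R : ℝ := 2*θ + 2*θ' + |a| + |b| + 1 with hR
  have hRR : -R ≤ R := by
    have := abs_nonneg a; have := abs_nonneg b; simp only [hR]; linarith
  have habs : ∀ (θ₀ x : ℝ), 0 < θ₀ → 2*θ₀ ≤ |x| → cdiff4 θ₀ (fun y => |y|) x = 0 := by
    intro θ₀ x h0 hx
    rcases le_total 0 x with hx0 | hx0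
    · rw [abs_of_nonneg hx0] at hx
      simp only [cdiff4]
      rw [abs_of_nonneg (by linarith), abs_of_nonneg (by linarith), abs_of_nonneg hx0,
          abs_of_nonneg (by linarith), abs_of_nonneg (by linarith)]
      ring
    · rw [abs_of_nonpos hx0] at hx
      simp only [cdiff4]
      rw [abs_of_nonpos (by linarith), abs_of_nonpos (by linarith), abs_of_nonpos hx0,
          abs_of_nonpos (by linarith), abs_of_nonpos (by linarith)]
      ring
  have hzero : ∀ u : ℝ, u ∉ Set.Icc (-R) R →
      cdiff4 θ (fun x => |x|) (u + a) * cdiff4 θ' (fun x => |x|) (u + b) = 0 := by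
    intro u hu
    simp only [Set.mem_Icc, not_and_or, not_le] at hu
    have hna := neg_abs_le a
    have hpa := le_abs_self a
    have hnb := abs_nonneg b
    have h2θ : 2*θ ≤ |u + a| := by
      rcases hu with h | h
      · refine le_abs.mpr (Or.inr ?_)
        simp only [hR] at h; linarith
      · refine le_abs.mpr (Or.inl ?_)
        simp only [hR] at h; linarith
    rw [habs θ (u + a) hθ h2θ, zero_mul]
  refine ⟨HasCompactSupport.intro isCompact_Icc hzero, ?_⟩
  rw [← MeasureTheory.setIntegral_eq_integral_of_forall_compl_eq_zero hzero,
      MeasureTheory.integral_Icc_eq_integral_Ioc, ← intervalIntegral.integral_of_le hRR]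
  have hcont1 : Continuous (fun u : ℝ => cdiff4 θ (fun x => |x|) (u + a)) := by
    simp only [cdiff4]; fun_prop
  have e : ∀ u : ℝ, cdiff4 θ (fun x => |x|) (u + a) * cdiff4 θ' (fun x => |x|) (u + b)
      = cdiff4 θ (fun x => |x|) (u + a) * |u + (b + 2*θ')|
        - 4*(cdiff4 θ (fun x => |x|) (u + a) * |u + (b + θ')|)
        + 6*(cdiff4 θ (fun x => |x|) (u + a) * |u + b|)
        - 4*(cdiff4 θ (fun x => |x|) (u + a) * |u + (b - θ')|)
        + cdiff4 θ (fun x => |x|) (u + a) * |u + (b - 2*θ')| := by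
    intro u
    have : cdiff4 θ' (fun x => |x|) (u + b)
        = |u + (b + 2*θ')| - 4*|u + (b + θ')| + 6*|u + b| - 4*|u + (b - θ')| + |u + (b - 2*θ')| := by
      simp only [cdiff4]
      rw [show u + b + 2*θ' = u + (b + 2*θ') by ring, show u + b + θ' = u + (b + θ') by ring,
          show u + b - θ' = u + (b - θ') by ring, show u + b - 2*θ' = u + (b - 2*θ') by ring]
    rw [this]; ring
  simp only [e]
  have hb : ∀ t : ℝ, |t| ≤ 2*θ' → |b + t| ≤ R := by
    intro t ht
    calc |b + t| ≤ |b| + |t| := abs_add_le _ _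
    _ ≤ R := by simp only [hR]; have := abs_nonneg a; linarith
  have ha : ∀ t : ℝ, |t| ≤ 2*θ → |a + t| ≤ R := by
    intro t ht
    calc |a + t| ≤ |a| + |t| := abs_add_le _ _
    _ ≤ R := by simp only [hR]; have := abs_nonneg b; linarith
  have g1 : |a + 2*θ| ≤ R := ha _ (by rw [abs_of_nonneg (by linarith)])
  have g2 : |a + θ| ≤ R := ha _ (by rw [abs_of_nonneg (by linarith)]; linarith)
  have g3 : |a| ≤ R := by simpa using ha 0 (by simp; linarith)
  have g4 : |a - θ| ≤ R := by
    have := ha (-θ) (by rw [abs_of_nonpos (by linarith)]; linarith)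
    simpa [sub_eq_add_neg] using this
  have g5 : |a - 2*θ| ≤ R := by
    have := ha (-(2*θ)) (by rw [abs_of_nonpos (by linarith)]; linarith)
    simpa [sub_eq_add_neg] using this
  rw [intsum (-R) R _ _ _ _ _
      ((hcont1.fun_mul (by fun_prop)).intervalIntegrable _ _)
      ((hcont1.fun_mul (by fun_prop)).intervalIntegrable _ _)
      ((hcont1.fun_mul (by fun_prop)).intervalIntegrable _ _)
      ((hcont1.fun_mul (by fun_prop)).intervalIntegrable _ _)
      ((hcont1.fun_mul (by fun_prop)).intervalIntegrable _ _),
     stage1 θ a _ R g1 g2 g3 g4 g5 (hb (2*θ') (by rw [abs_of_nonneg (by linarith)])),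
     stage1 θ a _ R g1 g2 g3 g4 g5 (hb θ' (by rw [abs_of_nonneg (by linarith)]; linarith)),
     stage1 θ a _ R g1 g2 g3 g4 g5 (by simpa using hb 0 (by simp; linarith)),
     stage1 θ a _ R g1 g2 g3 g4 g5 (by simpa [sub_eq_add_neg] using hb (-θ') (by rw [abs_of_nonpos (by linarith)]; linarith)),
     stage1 θ a _ R g1 g2 g3 g4 g5 (by simpa [sub_eq_add_neg] using hb (-(2*θ')) (by rw [abs_of_nonpos (by linarith)]; linarith))]
  simp only [cdiff4]
  ring_nf
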